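/- For every context-free grammar G = (N, T, P, S) whose language does not contain the empty word, there exists a context-free grammar G' = (N', T, P', S) in Dyck normal form such that L(G') = L(G). -/

import Mathlib

/-- A context-free grammar is in Chomsky normal form: every rule is of the form `X → AB`
with `A`, `B` nonterminals, or `X → a` with `a` a terminal. -/
def IsChomskyNF {T : Type} (g : ContextFreeGrammar T) : Prop :=
  ∀ r ∈ g.rules,
    (∃ A B : g.NT, r.output = [Symbol.nonterminal A, Symbol.nonterminal B]) ∨
    (∃ a : T, r.output = [Symbol.terminal a])

/-- A context-free grammar is in Dyck normal form:
(1) it is in Chomsky normal form;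
(2) if `A → a` is a rule with `A ≠ S`, then no other rule rewrites `A`;
(3) if `X → AB` and `X' → B'A` are both rules, they are the same rule
    (i.e. no *other* rule has `A` on the opposite side);
(4) if `X → AB` and `X' → A'B` are rules then `A = A'`, and if `X → AB` and `X' → AB'`
    are rules then `B = B'`. -/
def IsDyckNF {T : Type} (g : ContextFreeGrammar T) : Prop :=
  IsChomskyNF g ∧
  (∀ r ∈ g.rules, ∀ a : T, r.output = [Symbol.terminal a] → r.input ≠ g.initial →
    ∀ r' ∈ g.rules, r'.input = r.input → r' = r) ∧
  (∀ r ∈ g.rules, ∀ r' ∈ g.rules, ∀ A B B' : g.NT,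
    r.output = [Symbol.nonterminal A, Symbol.nonterminal B] →
    r'.output = [Symbol.nonterminal B', Symbol.nonterminal A] → r = r') ∧
  (∀ r ∈ g.rules, ∀ r' ∈ g.rules, ∀ A A' B B' : g.NT,
    r.output = [Symbol.nonterminal A, Symbol.nonterminal B] →
    r'.output = [Symbol.nonterminal A', Symbol.nonterminal B'] →
    (B = B' → A = A') ∧ (A = A' → B = B'))


/-!
Binarize the grammar, giving every suffix of a right-hand side its own nonterminal, and eliminate
ε-rules and unit rules; since `[] ∉ L(G)` this gives a grammar in Chomsky normal form with the
same language. Then split every nonterminal according to where it is introduced: a new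
nonterminal is the left or the right child of a binary right-hand side, tagged with the two rules
that are to rewrite the children. Left and right children are then distinct, each child determines
its sibling, and a child committed to a terminal rule has no other rule, which are conditions
(2)–(4); forgetting the tags maps derivations back to the Chomsky normal form grammar.
-/

namespace ContextFreeRule

variable {T N : Type*}

def IsChomsky (r : ContextFreeRule T N) : Prop :=
  (∃ A B, r.output = [.nonterminal A, .nonterminal B]) ∨ ∃ a, r.output = [.terminal a]

def IsWeakChomsky (r : ContextFreeRule T N) : Prop :=
  r.output = [] ∨ (∃ B, r.output = [.nonterminal B]) ∨ r.IsChomsky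

lemma Rewrites.append_cases {r : ContextFreeRule T N} {u₁ u₂ v : List (Symbol T N)}
    (h : r.Rewrites (u₁ ++ u₂) v) :
    (∃ v₁, r.Rewrites u₁ v₁ ∧ v = v₁ ++ u₂) ∨ ∃ v₂, r.Rewrites u₂ v₂ ∧ v = u₁ ++ v₂ := by
  induction u₁ generalizing v with
  | nil => exact .inr ⟨v, h, rfl⟩
  | cons x u₁ ih =>
    cases h with
    | head => exact .inl ⟨_, .head u₁, by simp⟩
    | cons _ h =>
      obtain ⟨v₁, hv₁, rfl⟩ | ⟨v₂, hv₂, rfl⟩ := ih h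
      · exact .inl ⟨x :: v₁, hv₁.cons x, rfl⟩
      · exact .inr ⟨v₂, hv₂, rfl⟩

end ContextFreeRule

namespace ContextFreeGrammar

section Derivations

variable {T : Type*} {g : ContextFreeGrammar T}

lemma produces_of_mem_rules {r : ContextFreeRule T g.NT} (hr : r ∈ g.rules) :
    g.Produces [.nonterminal r.input] r.output :=
  ⟨r, hr, .input_output⟩

lemma produces_singleton_iff {X : g.NT} {v : List (Symbol T g.NT)} :
    g.Produces [.nonterminal X] v ↔ ∃ r ∈ g.rules, r.input = X ∧ r.output = v := by
  constructor
  · rintro ⟨r, hr, hrw⟩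
    cases hrw with
    | head => exact ⟨r, hr, rfl, by simp⟩
    | cons _ h => cases h
  · rintro ⟨r, hr, rfl, rfl⟩
    exact produces_of_mem_rules hr

lemma Derives.eq_of_map_terminal {w : List T} {v : List (Symbol T g.NT)}
    (h : g.Derives (w.map .terminal) v) : v = w.map .terminal := by
  obtain h | ⟨_, hp, -⟩ := h.eq_or_head
  · exact h.symm
  · obtain ⟨r, -, hr⟩ := hp.exists_nonterminal_input_mem
    simp at hr

lemma Derives.flatMap_of_forall_rules {g₁ g₂ : ContextFreeGrammar T}
    (f : Symbol T g₁.NT → List (Symbol T g₂.NT))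
    (hf : ∀ r ∈ g₁.rules, g₂.Derives (f (.nonterminal r.input)) (r.output.flatMap f))
    {u v : List (Symbol T g₁.NT)} (h : g₁.Derives u v) :
    g₂.Derives (u.flatMap f) (v.flatMap f) := by
  induction h with
  | refl => rfl
  | tail _ hp ih =>
    obtain ⟨r, hr, hrw⟩ := hp
    obtain ⟨p, q, rfl, rfl⟩ := hrw.exists_parts
    refine ih.trans ?_
    simpa only [List.flatMap_append, List.flatMap_singleton] using
      ((hf r hr).append_left _).append_right _

theorem language_le_of_simulation {g₁ g₂ : ContextFreeGrammar T}
    (f : Symbol T g₁.NT → List (Symbol T g₂.NT)) (hterm : ∀ a, f (.terminal a) = [.terminal a])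
    (hinit : f (.nonterminal g₁.initial) = [.nonterminal g₂.initial])
    (hf : ∀ r ∈ g₁.rules, g₂.Derives (f (.nonterminal r.input)) (r.output.flatMap f)) :
    g₁.language ≤ g₂.language := by
  intro w hw
  have h := Derives.flatMap_of_forall_rules f hf hw
  rwa [List.flatMap_singleton, hinit, List.flatMap_map, funext hterm, ← List.map_eq_flatMap,
    ← mem_language_iff] at h

variable (g) in
inductive DerivesIn : ℕ → List (Symbol T g.NT) → List (Symbol T g.NT) → Prop
  | refl (u : List (Symbol T g.NT)) : DerivesIn 0 u u
  | head {n : ℕ} {u v w : List (Symbol T g.NT)} :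
      g.Produces u v → DerivesIn n v w → DerivesIn (n + 1) u w

lemma Derives.exists_derivesIn {u v : List (Symbol T g.NT)} (h : g.Derives u v) :
    ∃ n, g.DerivesIn n u v := by
  induction h using Relation.ReflTransGen.head_induction_on with
  | refl => exact ⟨0, .refl _⟩
  | head hp _ ih =>
    obtain ⟨n, hn⟩ := ih
    exact ⟨n + 1, .head hp hn⟩

lemma DerivesIn.derives {n : ℕ} {u v : List (Symbol T g.NT)} (h : g.DerivesIn n u v) :
    g.Derives u v := by
  induction h with
  | refl => rfl
  | head hp _ ih => exact hp.trans_derives ih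

lemma DerivesIn.append_split {n : ℕ} {u₁ u₂ w : List (Symbol T g.NT)}
    (h : g.DerivesIn n (u₁ ++ u₂) w) :
    ∃ w₁ w₂ n₁ n₂, w = w₁ ++ w₂ ∧ n₁ + n₂ = n ∧
      g.DerivesIn n₁ u₁ w₁ ∧ g.DerivesIn n₂ u₂ w₂ := by
  induction n generalizing u₁ u₂ with
  | zero =>
    cases h
    exact ⟨u₁, u₂, 0, 0, rfl, rfl, .refl _, .refl _⟩
  | succ n ih =>
    obtain _ | ⟨⟨r, hr, hrw⟩, hd⟩ := h
    obtain ⟨v₁, hv₁, rfl⟩ | ⟨v₂, hv₂, rfl⟩ := hrw.append_cases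
    · obtain ⟨w₁, w₂, n₁, n₂, rfl, rfl, hd₁, hd₂⟩ := ih hd
      exact ⟨w₁, w₂, n₁ + 1, n₂, rfl, by omega, .head ⟨r, hr, hv₁⟩ hd₁, hd₂⟩
    · obtain ⟨w₁, w₂, n₁, n₂, rfl, rfl, hd₁, hd₂⟩ := ih hd
      exact ⟨w₁, w₂, n₁, n₂ + 1, rfl, by omega, hd₁, .head ⟨r, hr, hv₂⟩ hd₂⟩

theorem Derives.induction_of_isWeakChomsky (hg : ∀ r ∈ g.rules, r.IsWeakChomsky)
    {P : g.NT → List T → Prop}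
    (empty : ∀ r ∈ g.rules, r.output = [] → P r.input [])
    (unit : ∀ r ∈ g.rules, ∀ B w, r.output = [.nonterminal B] → P B w → P r.input w)
    (terminal : ∀ r ∈ g.rules, ∀ a, r.output = [.terminal a] → P r.input [a])
    (binary : ∀ r ∈ g.rules, ∀ B C w₁ w₂, r.output = [.nonterminal B, .nonterminal C] →
      g.Derives [.nonterminal B] (w₁.map .terminal) →
      g.Derives [.nonterminal C] (w₂.map .terminal) → P B w₁ → P C w₂ → P r.input (w₁ ++ w₂))
    {X : g.NT} {w : List T} (h : g.Derives [.nonterminal X] (w.map .terminal)) : P X w := by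
  obtain ⟨n, hn⟩ := h.exists_derivesIn
  clear h
  induction n using Nat.strong_induction_on generalizing X w with
  | _ n ih =>
  generalize hv : w.map Symbol.terminal = v at hn
  obtain _ | ⟨hp, hd⟩ := hn
  · cases w <;> simp_all
  subst hv
  obtain ⟨r, hr, rfl, rfl⟩ := produces_singleton_iff.1 hp
  obtain hε | ⟨B, hB⟩ | ⟨B, C, hBC⟩ | ⟨a, ha⟩ := hg r hr
  · rw [hε] at hd
    obtain rfl : w = [] := by simpa using hd.derives.eq_of_map_terminal (w := [])
    exact empty r hr hε
  · rw [hB] at hd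
    exact unit r hr B w hB (ih _ (by omega) hd)
  · rw [hBC, ← List.singleton_append] at hd
    obtain ⟨_, _, n₁, n₂, hw, hn, hd₁, hd₂⟩ := hd.append_split
    obtain ⟨w₁, w₂, rfl, rfl, rfl⟩ := List.map_eq_append_iff.1 hw
    exact binary r hr B C w₁ w₂ hBC hd₁.derives hd₂.derives
      (ih n₁ (by omega) hd₁) (ih n₂ (by omega) hd₂)
  · rw [ha] at hd
    have := hd.derives.eq_of_map_terminal (w := [a])
    obtain rfl : w = [a] := List.map_injective_iff.2 (fun _ _ => Symbol.terminal.inj) this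
    exact terminal r hr a ha

end Derivations

section SuffixRules

variable {T N : Type*}

/-- The rules of the nonterminal `inr l`, which derives exactly `l`; the nonterminal `inr [a]`
doubles as a proxy for the terminal `a`. -/
def suffixRules : List (Symbol T N) → List (ContextFreeRule T (N ⊕ List (Symbol T N)))
  | [] => [⟨.inr [], []⟩]
  | .nonterminal X :: l =>
    [⟨.inr (.nonterminal X :: l), [.nonterminal (.inl X), .nonterminal (.inr l)]⟩]
  | .terminal a :: l =>
    [⟨.inr (.terminal a :: l), [.nonterminal (.inr [.terminal a]), .nonterminal (.inr l)]⟩,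
      ⟨.inr [.terminal a], [.terminal a]⟩]

def flattenSym : Symbol T (N ⊕ List (Symbol T N)) → List (Symbol T N)
  | .terminal a => [.terminal a]
  | .nonterminal (.inl X) => [.nonterminal X]
  | .nonterminal (.inr l) => l

def embedSym : Symbol T N → Symbol T (N ⊕ List (Symbol T N))
  | .terminal a => .terminal a
  | .nonterminal X => .nonterminal (.inl X)

end SuffixRules

section Binarize

variable {T : Type} (g : ContextFreeGrammar T)

open Classical in
@[reducible] noncomputable def binarize : ContextFreeGrammar T where
  NT := g.NT ⊕ List (Symbol T g.NT)
  initial := .inl g.initial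
  rules := g.rules.biUnion fun r =>
    insert ⟨.inl r.input, [.nonterminal (.inr r.output)]⟩
      (r.output.tails.flatMap suffixRules).toFinset

variable {g}

lemma mem_binarize_rules {ρ : ContextFreeRule T g.binarize.NT} :
    ρ ∈ g.binarize.rules ↔ ∃ r ∈ g.rules, ρ = ⟨.inl r.input, [.nonterminal (.inr r.output)]⟩ ∨
      ∃ l, l <:+ r.output ∧ ρ ∈ suffixRules l := by
  simp only [binarize, Finset.mem_biUnion, Finset.mem_insert, List.mem_toFinset, List.mem_flatMap,
    List.mem_tails]

lemma isWeakChomsky_of_mem_binarize_rules {ρ : ContextFreeRule T g.binarize.NT}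
    (hρ : ρ ∈ g.binarize.rules) : ρ.IsWeakChomsky := by
  obtain ⟨r, -, rfl | ⟨l, -, hl⟩⟩ := mem_binarize_rules.1 hρ
  · exact .inr (.inl ⟨_, rfl⟩)
  · clear hρ
    revert ρ
    rcases l with _ | ⟨_ | X, l⟩ <;>
      simp [suffixRules, ContextFreeRule.IsWeakChomsky, ContextFreeRule.IsChomsky]

lemma produces_of_mem_suffixRules {r : ContextFreeRule T g.NT} (hr : r ∈ g.rules)
    {l : List (Symbol T g.NT)} (hl : l <:+ r.output) {ρ : ContextFreeRule T g.binarize.NT}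
    (hρ : ρ ∈ suffixRules l) : g.binarize.Produces [.nonterminal ρ.input] ρ.output :=
  produces_of_mem_rules (mem_binarize_rules.2 ⟨r, hr, .inr ⟨l, hl, hρ⟩⟩)

lemma derives_suffix {r : ContextFreeRule T g.NT} (hr : r ∈ g.rules) {l : List (Symbol T g.NT)}
    (hl : l <:+ r.output) :
    g.binarize.Derives [.nonterminal (.inr l)] (l.map embedSym) := by
  induction l with
  | nil => exact (produces_of_mem_suffixRules hr hl List.mem_cons_self).single
  | cons s l ih =>
    have hrest := ih ((List.suffix_cons s l).trans hl)
    cases s with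
    | nonterminal X =>
      exact (produces_of_mem_suffixRules hr hl List.mem_cons_self).trans_derives
        (hrest.append_left [.nonterminal (.inl X)])
    | terminal a =>
      have hterm := produces_of_mem_suffixRules hr hl (List.mem_cons_of_mem _ List.mem_cons_self)
      exact (produces_of_mem_suffixRules hr hl List.mem_cons_self).trans_derives
        ((hterm.single.append_right _).trans (hrest.append_left [.terminal a]))

theorem binarize_language : g.binarize.language = g.language := by
  refine le_antisymm (language_le_of_simulation flattenSym (fun _ => rfl) rfl ?_)
    (language_le_of_simulation (fun s => [embedSym s]) (fun _ => rfl) rfl ?_)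
  · intro ρ hρ
    obtain ⟨r, hr, rfl | ⟨l, -, hl⟩⟩ := mem_binarize_rules.1 hρ
    · rw [List.flatMap_singleton]
      exact (produces_of_mem_rules hr).single
    · clear hρ
      revert ρ
      rcases l with _ | ⟨_ | X, l⟩ <;> simp [suffixRules, flattenSym, Derives.refl]
  · intro r hr
    exact (produces_of_mem_rules (mem_binarize_rules.2 ⟨r, hr, .inl rfl⟩)).trans_derives
      (by simpa only [List.map_eq_flatMap] using derives_suffix hr List.suffix_rfl)

end Binarize

section EpsUnit

open Relation

variable {T : Type*} (g : ContextFreeGrammar T)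

/-- Erasing a nullable sibling turns a binary rule into a unit rule; this is how ε-rules
disappear. -/
def UnitStep (X Y : g.NT) : Prop :=
  ∃ r ∈ g.rules, r.input = X ∧ (r.output = [.nonterminal Y] ∨ ∃ Z, g.Derives [.nonterminal Z] [] ∧
    (r.output = [.nonterminal Y, .nonterminal Z] ∨ r.output = [.nonterminal Z, .nonterminal Y]))

open Classical in
@[reducible] noncomputable def elimEpsUnit : ContextFreeGrammar T where
  NT := g.NT
  initial := g.initial
  rules := ((g.rules ×ˢ g.rules).filter fun p =>
      ReflTransGen g.UnitStep p.1.input p.2.input ∧ p.2.IsChomsky).image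
    fun p => ⟨p.1.input, p.2.output⟩

variable {g}

lemma mem_elimEpsUnit_rules {ρ : ContextFreeRule T g.NT} :
    ρ ∈ g.elimEpsUnit.rules ↔ ∃ σ ∈ g.rules, ∃ r ∈ g.rules,
      ReflTransGen g.UnitStep σ.input r.input ∧ r.IsChomsky ∧ ρ = ⟨σ.input, r.output⟩ := by
  simp only [Finset.mem_image, Finset.mem_filter, Finset.mem_product, Prod.exists]
  constructor
  · rintro ⟨σ, r, ⟨⟨hσ, hr⟩, hu, hc⟩, rfl⟩
    exact ⟨σ, hσ, r, hr, hu, hc, rfl⟩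
  · rintro ⟨σ, hσ, r, hr, hu, hc, rfl⟩
    exact ⟨σ, r, ⟨⟨hσ, hr⟩, hu, hc⟩, rfl⟩

lemma isChomsky_of_mem_elimEpsUnit_rules {ρ : ContextFreeRule T g.NT}
    (hρ : ρ ∈ g.elimEpsUnit.rules) : ρ.IsChomsky := by
  obtain ⟨-, -, r, -, -, hc, rfl⟩ := mem_elimEpsUnit_rules.1 hρ
  exact hc

lemma UnitStep.derives {X Y : g.NT} (h : g.UnitStep X Y) :
    g.Derives [.nonterminal X] [.nonterminal Y] := by
  obtain ⟨r, hr, rfl, hY | ⟨Z, hZ, hYZ | hZY⟩⟩ := h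
  · exact hY ▸ (produces_of_mem_rules hr).single
  · exact (hYZ ▸ produces_of_mem_rules hr).trans_derives (hZ.append_left [.nonterminal Y])
  · exact (hZY ▸ produces_of_mem_rules hr).trans_derives (hZ.append_right [.nonterminal Y])

lemma elimEpsUnit_produces {r : ContextFreeRule T g.NT} (hr : r ∈ g.rules) (hc : r.IsChomsky)
    {A : g.NT} (hA : ReflTransGen g.UnitStep A r.input) :
    g.elimEpsUnit.Produces [.nonterminal A] r.output := by
  obtain ⟨σ, hσ, rfl⟩ : ∃ σ ∈ g.rules, σ.input = A := by
    obtain rfl | ⟨_, ⟨σ, hσ, hσA, -⟩, -⟩ := hA.cases_head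
    exacts [⟨r, hr, rfl⟩, ⟨σ, hσ, hσA⟩]
  exact produces_of_mem_rules (mem_elimEpsUnit_rules.2 ⟨σ, hσ, r, hr, hA, hc, rfl⟩)

theorem elimEpsUnit_language (hg : ∀ r ∈ g.rules, r.IsWeakChomsky) (hε : [] ∉ g.language) :
    g.elimEpsUnit.language = g.language := by
  refine le_antisymm (language_le_of_simulation (fun s => [s]) (fun _ => rfl) rfl ?_) ?_
  · intro ρ hρ
    obtain ⟨σ, -, r, hr, hu, -, rfl⟩ := mem_elimEpsUnit_rules.1 hρ
    rw [List.flatMap_singleton']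
    exact (hu.lift' _ fun _ _ => UnitStep.derives).trans (produces_of_mem_rules hr).single
  intro w hw
  refine Derives.induction_of_isWeakChomsky hg
    (P := fun X w => w ≠ [] → ∀ A, ReflTransGen g.UnitStep A X →
      g.elimEpsUnit.Derives [.nonterminal A] (w.map .terminal))
    (fun _ _ _ hne => absurd rfl hne)
    (fun r hr B w hB ih hne A hA => ih hne A (hA.tail ⟨r, hr, rfl, .inl hB⟩))
    (fun r hr a ha _ A hA => (ha ▸ elimEpsUnit_produces hr (.inr ⟨a, ha⟩) hA).single)
    ?_ hw (by rintro rfl; exact hε hw) _ .refl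
  intro r hr B C w₁ w₂ hBC hB hC ihB ihC hne A hA
  obtain rfl | h₁ := eq_or_ne w₁ []
  · exact ihC (by simpa using hne) A (hA.tail ⟨r, hr, rfl, .inr ⟨B, hB, .inr hBC⟩⟩)
  obtain rfl | h₂ := eq_or_ne w₂ []
  · simpa using ihB h₁ A (hA.tail ⟨r, hr, rfl, .inr ⟨C, hC, .inl hBC⟩⟩)
  refine (elimEpsUnit_produces hr (.inl ⟨B, C, hBC⟩) hA).trans_derives ?_
  rw [hBC, List.map_append]
  exact ((ihB h₁ B .refl).append_right _).trans ((ihC h₂ C .refl).append_left _)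

end EpsUnit

section Dyck

variable {T : Type} (g : ContextFreeGrammar T)

/-- `some (b, σ, τ)` is the left (`b = false`) or right (`b = true`) nonterminal on the right-hand
side of a binary rule whose left and right nonterminals are to be rewritten by `σ` and `τ`;
`none` is the start symbol. -/
abbrev DyckNT : Type := Option (Bool × g.rules × g.rules)

def Commits : g.DyckNT → g.rules → Prop
  | none, ρ => ρ.1.input = g.initial
  | some (b, σ, τ), ρ => ρ = cond b τ σ

def dyckPair (σ τ : g.rules) : List (Symbol T g.DyckNT) :=
  [.nonterminal (some (false, σ, τ)), .nonterminal (some (true, σ, τ))]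

inductive IsDyckRule : ContextFreeRule T g.DyckNT → Prop
  | terminal {o : g.DyckNT} {ρ : g.rules} {a : T} :
      g.Commits o ρ → ρ.1.output = [.terminal a] → IsDyckRule ⟨o, [.terminal a]⟩
  | binary {o : g.DyckNT} {ρ σ τ : g.rules} : g.Commits o ρ →
      ρ.1.output = [.nonterminal σ.1.input, .nonterminal τ.1.input] →
      IsDyckRule ⟨o, g.dyckPair σ τ⟩

lemma finite_setOf_isDyckRule : {r | g.IsDyckRule r}.Finite := by
  -- only the values of `f` at terminals matter
  let f : Symbol T g.NT → Symbol T g.DyckNT := Symbol.rec .terminal fun _ => .nonterminal none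
  refine ((Set.finite_range fun p : g.DyckNT × g.rules =>
      (⟨p.1, p.2.1.output.map f⟩ : ContextFreeRule T g.DyckNT)).union
    (Set.finite_range fun p : g.DyckNT × g.rules × g.rules =>
      (⟨p.1, g.dyckPair p.2.1 p.2.2⟩ : ContextFreeRule T g.DyckNT))).subset ?_
  rintro _ (@⟨o, ρ, a, -, hρ⟩ | @⟨o, ρ, σ, τ, -, -⟩)
  · exact .inl ⟨(o, ρ), by simp [hρ, f]⟩
  · exact .inr ⟨(o, σ, τ), rfl⟩

@[reducible] noncomputable def dyck : ContextFreeGrammar T where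
  NT := g.DyckNT
  initial := none
  rules := g.finite_setOf_isDyckRule.toFinset

def dyckLabel : g.DyckNT → g.NT
  | none => g.initial
  | some (b, σ, τ) => (cond b τ σ).1.input

variable {g}

lemma mem_dyck_rules {r : ContextFreeRule T g.DyckNT} : r ∈ g.dyck.rules ↔ g.IsDyckRule r :=
  Set.Finite.mem_toFinset _

lemma Commits.dyckLabel_eq {o : g.DyckNT} {ρ : g.rules} (h : g.Commits o ρ) :
    g.dyckLabel o = ρ.1.input := by
  rcases o with _ | ⟨b, σ, τ⟩
  · exact h.symm
  · exact congrArg (fun ρ : g.rules => ρ.1.input) h.symm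

theorem dyck_language (hg : ∀ r ∈ g.rules, r.IsChomsky) : g.dyck.language = g.language := by
  refine le_antisymm (language_le_of_simulation
    (Symbol.rec (fun a => [.terminal a]) fun o => [.nonterminal (g.dyckLabel o)])
    (fun _ => rfl) rfl ?_) ?_
  · intro r hr
    rcases mem_dyck_rules.1 hr with @⟨o, ρ, a, ho, hρ⟩ | @⟨o, ρ, σ, τ, ho, hρ⟩
    · show g.Derives [.nonterminal (g.dyckLabel o)] [.terminal a]
      rw [ho.dyckLabel_eq, ← hρ]
      exact (produces_of_mem_rules ρ.2).single
    · show g.Derives [.nonterminal (g.dyckLabel o)] [.nonterminal σ.1.input, .nonterminal τ.1.input]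
      rw [ho.dyckLabel_eq, ← hρ]
      exact (produces_of_mem_rules ρ.2).single
  intro w hw
  obtain ⟨ρ, hρ, hder⟩ := Derives.induction_of_isWeakChomsky (fun r hr => .inr (.inr (hg r hr)))
    (P := fun X w => ∃ ρ : g.rules, ρ.1.input = X ∧
      ∀ o, g.Commits o ρ → g.dyck.Derives [.nonterminal o] (w.map .terminal))
    (fun r hr hε => by rcases hg r hr with ⟨_, _, h⟩ | ⟨_, h⟩ <;> simp [hε] at h)
    (fun r hr B _ hB _ => by rcases hg r hr with ⟨_, _, h⟩ | ⟨_, h⟩ <;> simp [hB] at h)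
    (fun r hr a ha => ⟨⟨r, hr⟩, rfl, fun o ho =>
      (produces_of_mem_rules (mem_dyck_rules.2 (.terminal ho ha))).single⟩)
    (fun r hr B C w₁ w₂ hBC _ _ ⟨σ, hσ, hσw⟩ ⟨τ, hτ, hτw⟩ => ⟨⟨r, hr⟩, rfl, fun o ho => by
      subst hσ hτ
      refine (produces_of_mem_rules (mem_dyck_rules.2 (.binary ho hBC))).trans_derives ?_
      rw [List.map_append]
      exact ((hσw (some (false, σ, τ)) rfl).append_right _).trans
        ((hτw (some (true, σ, τ)) rfl).append_left _)⟩) hw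
  exact hder none hρ

lemma exists_eq_of_mem_dyck_rules {r : ContextFreeRule T g.DyckNT} (hr : r ∈ g.dyck.rules)
    {A B : g.DyckNT} (h : r.output = [.nonterminal A, .nonterminal B]) :
    ∃ σ τ, A = some (false, σ, τ) ∧ B = some (true, σ, τ) := by
  rcases mem_dyck_rules.1 hr with _ | @⟨o, ρ, σ, τ, -, -⟩
  · simp at h
  · simp only [dyckPair, List.cons.injEq, Symbol.nonterminal.injEq, and_true] at h
    exact ⟨σ, τ, h.1.symm, h.2.symm⟩

theorem isDyckNF_dyck : IsDyckNF g.dyck := by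
  refine ⟨fun r hr => ?_, ?_, ?_, ?_⟩
  · rcases mem_dyck_rules.1 hr with _ | _
    exacts [.inr ⟨_, rfl⟩, .inl ⟨_, _, rfl⟩]
  · intro r hr a hout hinit r' hr' hin
    rcases mem_dyck_rules.1 hr with @⟨o, ρ, b, ho, hρ⟩ | _
    swap
    · simp [dyckPair] at hout
    obtain ⟨p, rfl⟩ := Option.ne_none_iff_exists'.1 hinit
    have hcommit {ρ'} (ho' : g.Commits (some p) ρ') : ρ' = ρ := ho'.trans ho.symm
    rcases mem_dyck_rules.1 hr' with @⟨o', ρ', b', ho', hρ'⟩ | @⟨o', ρ', σ, τ, ho', hρ'⟩ <;>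
      obtain rfl : o' = some p := hin <;> obtain rfl := hcommit ho'
    · obtain rfl : b' = b := by simpa using hρ'.symm.trans hρ
      rfl
    · simp [hρ] at hρ'
  · intro r hr r' hr' A B B' hout hout'
    obtain ⟨σ, τ, rfl, -⟩ := exists_eq_of_mem_dyck_rules hr hout
    obtain ⟨σ', τ', -, h⟩ := exists_eq_of_mem_dyck_rules hr' hout'
    simp at h
  · intro r hr r' hr' A A' B B' hout hout'
    obtain ⟨σ, τ, rfl, rfl⟩ := exists_eq_of_mem_dyck_rules hr hout
    obtain ⟨σ', τ', rfl, rfl⟩ := exists_eq_of_mem_dyck_rules hr' hout'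
    simp

end Dyck

end ContextFreeGrammar

/-- For every context-free grammar `G` whose language does not contain the
empty word, there exists a context-free grammar `G'` in Dyck normal form generating the same
language. -/
theorem exists_dyckNF {T : Type} (G : ContextFreeGrammar T)
    (hG : [] ∉ G.language) :
    ∃ G' : ContextFreeGrammar T, IsDyckNF G' ∧ G'.language = G.language := by
  have hbin := G.binarize_language
  have hchomsky := ContextFreeGrammar.elimEpsUnit_language
    (fun _ => ContextFreeGrammar.isWeakChomsky_of_mem_binarize_rules) (hbin ▸ hG)
  refine ⟨G.binarize.elimEpsUnit.dyck, ContextFreeGrammar.isDyckNF_dyck, ?_⟩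
  rw [ContextFreeGrammar.dyck_language
    (fun _ => ContextFreeGrammar.isChomsky_of_mem_elimEpsUnit_rules), hchomsky, hbin]
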